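/- If φ: Mₙ(ℂ) → Mₙ(ℂ) is q-positive, then for every ε ∈ [0,1) the map φ_ε = εI + (1−ε)φ is q-positive; explicitly, I − (I + t φ_ε)⁻¹ = (1 − 1/(1+tε))·I + [t(1−ε)/(1+tε)²]·φ(I + (t(1−ε)/(1+tε))φ)⁻¹ for all t > 0. -/

import Mathlib

open scoped ComplexOrder BigOperators
open Matrix

abbrev MatC (n : ℕ) := Matrix (Fin n) (Fin n) ℂ

/-- Complete positivity of a linear map on `Mₙ(ℂ)`:
for all finite families `Aᵢ`, `fᵢ`, `∑ ⟨fᵢ, φ(Aᵢ* Aⱼ) fⱼ⟩ ≥ 0`. -/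
def IsCP {n : ℕ} (φ : Module.End ℂ (MatC n)) : Prop :=
  ∀ (m : ℕ) (A : Fin m → MatC n) (f : Fin m → (Fin n → ℂ)),
    0 ≤ ∑ i, ∑ j, star (f i) ⬝ᵥ ((φ ((A i)ᴴ * A j)) *ᵥ f j)

/-- `φ` has no negative (real) eigenvalues. -/
def NoNegEig {n : ℕ} (φ : Module.End ℂ (MatC n)) : Prop :=
  ∀ r : ℝ, r < 0 → ¬ Module.End.HasEigenvalue φ (r : ℂ)

/-- `φ^(t) = φ ∘ (I + t φ)⁻¹`. -/
noncomputable def qRes {n : ℕ} (φ : Module.End ℂ (MatC n)) (t : ℝ) :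
    Module.End ℂ (MatC n) :=
  φ * Ring.inverse (1 + (t : ℂ) • φ)

/-- `φ` is q-positive. -/
def IsQPos {n : ℕ} (φ : Module.End ℂ (MatC n)) : Prop :=
  NoNegEig φ ∧ ∀ t : ℝ, 0 ≤ t → IsCP (qRes φ t)

/-- `φ ≥_q ψ` : `φ(I+tφ)⁻¹ − ψ(I+tψ)⁻¹` is completely positive for all `t ≥ 0`. -/
def qLE {n : ℕ} (ψ φ : Module.End ℂ (MatC n)) : Prop :=
  ∀ t : ℝ, 0 ≤ t → IsCP (qRes φ t - qRes ψ t)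

/-- `φ` is q-pure: its q-subordinates are exactly `{0} ∪ {φ^(s) : s ≥ 0}`. -/
def IsQPure {n : ℕ} (φ : Module.End ℂ (MatC n)) : Prop :=
  IsQPos φ ∧ ∀ ψ : Module.End ℂ (MatC n),
    (IsQPos ψ ∧ qLE ψ φ) ↔ (ψ = 0 ∨ ∃ s : ℝ, 0 ≤ s ∧ ψ = qRes φ s)

/-- `φ_ε = ε I + (1−ε) φ`. -/
noncomputable def epsMap {n : ℕ} (φ : Module.End ℂ (MatC n)) (ε : ℝ) :
    Module.End ℂ (MatC n) :=
  (ε : ℂ) • 1 + ((1 - ε : ℝ) : ℂ) • φ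

/-! Put `c = 1 + t a` and `s = t b / c ≥ 0`. Then `1 + t (a + b φ) = c (1 + s φ)`, and `1 + s φ` is
invertible since `φ` has no negative eigenvalues. As `t φ (1 + t φ)⁻¹ = 1 - (1 + t φ)⁻¹`, the map
`(a + b φ)(1 + t (a + b φ))⁻¹` is a nonnegative combination of the identity and `φ (1 + s φ)⁻¹`,
and completely positive maps form a convex cone containing the identity. -/

section CompletePositivity

variable {n : ℕ}

theorem isCP_one : IsCP (1 : Module.End ℂ (MatC n)) := by
  intro m A f
  have hgram : ∑ i, ∑ j, star (f i) ⬝ᵥ (((1 : Module.End ℂ (MatC n)) ((A i)ᴴ * A j)) *ᵥ f j)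
      = star (∑ i, A i *ᵥ f i) ⬝ᵥ ∑ j, A j *ᵥ f j := by
    rw [star_sum, sum_dotProduct]
    simp only [dotProduct_sum, Module.End.one_apply, star_mulVec, ← dotProduct_mulVec,
      mulVec_mulVec]
  rw [hgram]
  exact dotProduct_star_self_nonneg _

theorem IsCP.add {φ ψ : Module.End ℂ (MatC n)} (hφ : IsCP φ) (hψ : IsCP ψ) :
    IsCP (φ + ψ) := by
  intro m A f
  simpa only [LinearMap.add_apply, add_mulVec, dotProduct_add, Finset.sum_add_distrib]
    using add_nonneg (hφ m A f) (hψ m A f)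

theorem IsCP.smul {φ : Module.End ℂ (MatC n)} (hφ : IsCP φ) {c : ℝ} (hc : 0 ≤ c) :
    IsCP ((c : ℂ) • φ) := by
  intro m A f
  simpa only [LinearMap.smul_apply, smul_mulVec, dotProduct_smul, smul_eq_mul,
    Finset.mul_sum] using mul_nonneg (by exact_mod_cast hc) (hφ m A f)

theorem IsCP.of_ofReal_smul {φ : Module.End ℂ (MatC n)} {c : ℝ} (hc : 0 < c)
    (hφ : IsCP ((c : ℂ) • φ)) : IsCP φ := by
  simpa [smul_smul, hc.ne'] using hφ.smul (inv_nonneg.2 hc.le)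

end CompletePositivity

section Algebra

open scoped Pointwise

variable {K A : Type*} [Field K] [Ring A]

theorem Ring.inverse_smul [Module K A] [IsScalarTower K A A] [SMulCommClass K A A] {c : K}
    (hc : c ≠ 0) (x : A) :
    Ring.inverse (c • x) = c⁻¹ • Ring.inverse x := by
  have hcx : IsUnit (c • x) ↔ IsUnit x := isUnit_smul_iff (Units.mk0 c hc) x
  by_cases hx : IsUnit x
  · calc _ = Ring.inverse (c • x) * ((c • x) * (c⁻¹ • Ring.inverse x)) := by
          rw [smul_mul_smul_comm, mul_inv_cancel₀ hc, Ring.mul_inverse_cancel _ hx, one_smul,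
            mul_one]
      _ = c⁻¹ • Ring.inverse x := Ring.inverse_mul_cancel_left _ _ (hcx.2 hx)
  · rw [Ring.inverse_non_unit _ hx, Ring.inverse_non_unit _ (mt hcx.1 hx), smul_zero]

theorem mem_spectrum_smul_one_add_smul_iff [Algebra K A] {a b μ : K} (hb : b ≠ 0) (x : A) :
    μ ∈ spectrum K (a • 1 + b • x) ↔ (μ - a) / b ∈ spectrum K x := by
  have hσ : spectrum K (b • x) = b • spectrum K x :=
    spectrum.unit_smul_eq_smul x (Units.mk0 b hb)
  rw [← Algebra.algebraMap_eq_smul_one, ← spectrum.singleton_add_eq, hσ, Set.singleton_add,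
    Set.mem_image]
  constructor
  · rintro ⟨ν, hν, rfl⟩
    simpa [Set.mem_smul_set_iff_inv_smul_mem₀ hb, div_eq_inv_mul] using hν
  · intro hμ
    refine ⟨μ - a, ?_, add_sub_cancel a μ⟩
    simpa [Set.mem_smul_set_iff_inv_smul_mem₀ hb, div_eq_inv_mul] using hμ

theorem one_sub_inverse_one_add {x : A} (hx : IsUnit (1 + x)) :
    1 - Ring.inverse (1 + x) = x * Ring.inverse (1 + x) := by
  rw [sub_eq_iff_eq_add', ← one_add_mul, Ring.mul_inverse_cancel _ hx]

end Algebra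

section QPositivity

variable {n : ℕ} {φ : Module.End ℂ (MatC n)}

theorem noNegEig_iff_forall_notMem_spectrum :
    NoNegEig φ ↔ ∀ r : ℝ, r < 0 → (r : ℂ) ∉ spectrum ℂ φ := by
  simp only [NoNegEig, Module.End.hasEigenvalue_iff_mem_spectrum]

theorem NoNegEig.isUnit_one_add_smul (hφ : NoNegEig φ) {s : ℝ} (hs : 0 ≤ s) :
    IsUnit (1 + (s : ℂ) • φ) := by
  rcases hs.eq_or_lt with rfl | hs
  · simp
  rw [← spectrum.zero_notMem_iff ℂ, ← one_smul ℂ (1 : Module.End ℂ (MatC n)),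
    mem_spectrum_smul_one_add_smul_iff (by exact_mod_cast hs.ne')]
  have := noNegEig_iff_forall_notMem_spectrum.1 hφ (-s⁻¹) (by simpa using hs)
  simpa [neg_div, div_eq_inv_mul] using this

theorem NoNegEig.smul_one_add_smul (hφ : NoNegEig φ) {a b : ℝ} (ha : 0 ≤ a) (hb : 0 < b) :
    NoNegEig ((a : ℂ) • 1 + (b : ℂ) • φ) := by
  rw [noNegEig_iff_forall_notMem_spectrum] at hφ ⊢
  intro r hr
  rw [mem_spectrum_smul_one_add_smul_iff (by exact_mod_cast hb.ne')]
  exact_mod_cast hφ ((r - a) / b) (div_neg_of_neg_of_pos (by linarith) hb)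

theorem qRes_zero (φ : Module.End ℂ (MatC n)) : qRes φ 0 = φ := by
  simp [qRes]

theorem smul_qRes {t : ℝ} (hu : IsUnit (1 + (t : ℂ) • φ)) :
    (t : ℂ) • qRes φ t = 1 - Ring.inverse (1 + (t : ℂ) • φ) := by
  rw [one_sub_inverse_one_add hu, qRes, smul_mul_assoc]

theorem one_add_smul_smul_one_add_smul (φ : Module.End ℂ (MatC n)) {a b t : ℝ}
    (hc : 1 + t * a ≠ 0) :
    1 + (t : ℂ) • ((a : ℂ) • 1 + (b : ℂ) • φ)
      = ((1 + t * a : ℝ) : ℂ) • (1 + ((t * b / (1 + t * a) : ℝ) : ℂ) • φ) := by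
  have hc' : (1 : ℂ) + t * a ≠ 0 := by exact_mod_cast hc
  match_scalars <;> field_simp

theorem NoNegEig.inverse_one_add_smul (hφ : NoNegEig φ) {s : ℝ} (hs : 0 ≤ s) :
    Ring.inverse (1 + (s : ℂ) • φ) = 1 - (s : ℂ) • qRes φ s := by
  rw [smul_qRes (hφ.isUnit_one_add_smul hs), sub_sub_cancel]

theorem NoNegEig.one_sub_inverse_one_add_smul_smul_one_add_smul (hφ : NoNegEig φ)
    {a b t : ℝ} (ha : 0 ≤ a) (hb : 0 ≤ b) (ht : 0 ≤ t) :
    1 - Ring.inverse (1 + (t : ℂ) • ((a : ℂ) • 1 + (b : ℂ) • φ))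
      = ((1 - 1 / (1 + t * a) : ℝ) : ℂ) • 1
        + ((t * b / (1 + t * a) ^ 2 : ℝ) : ℂ) • qRes φ (t * b / (1 + t * a)) := by
  have hc : 0 < 1 + t * a := by positivity
  have hc' : ((1 + t * a : ℝ) : ℂ) ≠ 0 := by exact_mod_cast hc.ne'
  rw [one_add_smul_smul_one_add_smul φ hc.ne',
    Ring.inverse_smul (A := Module.End ℂ (MatC n)) hc', hφ.inverse_one_add_smul (by positivity)]
  have hcoef : ((t * b / (1 + t * a) ^ 2 : ℝ) : ℂ)
      = ((1 + t * a : ℝ) : ℂ)⁻¹ * ((t * b / (1 + t * a) : ℝ) : ℂ) := by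
    push_cast; field_simp
  rw [hcoef]
  push_cast
  module

theorem IsQPos.smul_one_add_smul (hφ : IsQPos φ) {a b : ℝ} (ha : 0 ≤ a) (hb : 0 < b) :
    IsQPos ((a : ℂ) • 1 + (b : ℂ) • φ) := by
  refine ⟨hφ.1.smul_one_add_smul ha hb, fun t ht => ?_⟩
  rcases ht.eq_or_lt with rfl | ht
  · simpa only [qRes_zero] using (isCP_one.smul ha).add ((hφ.2 0 le_rfl).smul hb.le)
  have hres := smul_qRes ((hφ.1.smul_one_add_smul ha hb).isUnit_one_add_smul ht.le)
  rw [hφ.1.one_sub_inverse_one_add_smul_smul_one_add_smul ha hb.le ht.le] at hres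
  have hc : 0 < 1 + t * a := by positivity
  have hcoef : 0 ≤ 1 - 1 / (1 + t * a) :=
    sub_nonneg.2 ((div_le_one hc).2 (le_add_of_nonneg_right (by positivity)))
  refine IsCP.of_ofReal_smul ht ?_
  rw [hres]
  exact (isCP_one.smul hcoef).add ((hφ.2 _ (by positivity)).smul (by positivity))

end QPositivity

/-- If `φ` is q-positive then `φ_ε` is q-positive for `ε ∈ [0,1)`, with the explicit
resolvent identity. -/
theorem stmt13 {n : ℕ} (φ : Module.End ℂ (MatC n)) (hq : IsQPos φ)
    (ε : ℝ) (h0 : 0 ≤ ε) (h1 : ε < 1) :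
    IsQPos (epsMap φ ε) ∧
    ∀ t : ℝ, 0 < t →
      (1 : Module.End ℂ (MatC n)) - Ring.inverse (1 + (t : ℂ) • epsMap φ ε)
        = ((1 - 1 / (1 + t * ε) : ℝ) : ℂ) • (1 : Module.End ℂ (MatC n))
          + ((t * (1 - ε) / (1 + t * ε) ^ 2 : ℝ) : ℂ) •
              qRes φ (t * (1 - ε) / (1 + t * ε)) :=
  ⟨hq.smul_one_add_smul h0 (sub_pos.2 h1), fun _ ht =>
    hq.1.one_sub_inverse_one_add_smul_smul_one_add_smul h0 (sub_nonneg.2 h1.le) ht.le⟩
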